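/- Bianchi identity for the curvature of a gauge potential: Let A be a gauge potential on E (at least C³). Then the covariant exterior derivative of its curvature vanishes: for all x ∈ E and v₁, v₂, v₃ ∈ E, (fderiv ℝ (fun y => F_A y (v₂, v₃)) x) v₁ - (fderiv ℝ (fun y => F_A y (v₁, v₃)) x) v₂ + (fderiv ℝ (fun y => F_A y (v₁, v₂)) x) v₃ + [A x v₁, F_A x (v₂, v₃)] - [A x v₂, F_A x (v₁, v₃)] + [A x v₃, F_A x (v₁, v₂)] = 0, where [X, Y] := X * Y - Y * X denotes the matrix commutator. -/

import Mathlib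

set_option maxHeartbeats 1000000

open Matrix

attribute [local instance] Matrix.linftyOpNormedRing Matrix.linftyOpNormedAlgebra

variable {E : Type*} [NormedAddCommGroup E] [NormedSpace ℝ E] [FiniteDimensional ℝ E] {n : ℕ}

/-- The curvature of a gauge potential:
`F_A x (v, w) = (fderiv ℝ A x v) w - (fderiv ℝ A x w) v + (A x v) * (A x w) - (A x w) * (A x v)`. -/
noncomputable def curv (A : E → (E →L[ℝ] Matrix (Fin n) (Fin n) ℂ)) (x v w : E) :
    Matrix (Fin n) (Fin n) ℂ :=
  (fderiv ℝ A x v) w - (fderiv ℝ A x w) v + (A x v) * (A x w) - (A x w) * (A x v)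

noncomputable instance : NormedAddCommGroup (E →L[ℝ] Matrix (Fin n) (Fin n) ℂ) := ContinuousLinearMap.toNormedAddCommGroup
noncomputable instance : NormedSpace ℝ (E →L[ℝ] Matrix (Fin n) (Fin n) ℂ) := ContinuousLinearMap.toNormedSpace

lemma curv_fderiv_gen {𝔸 : Type*} [NormedRing 𝔸] [NormedAlgebra ℝ 𝔸] (A : E → (E →L[ℝ] 𝔸)) (hA : ContDiff ℝ 3 A)
    (x v w u : E) :
    fderiv ℝ (fun y => (fderiv ℝ A y v) w - (fderiv ℝ A y w) v + (A y v) * (A y w) - (A y w) * (A y v)) x u =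
      fderiv ℝ (fderiv ℝ A) x u v w - fderiv ℝ (fderiv ℝ A) x u w v
      + ((fderiv ℝ A x u v) * A x w + A x v * (fderiv ℝ A x u w))
      - ((fderiv ℝ A x u w) * A x v + A x w * (fderiv ℝ A x u v)) := by
  have hAd : DifferentiableAt ℝ A x := (hA.differentiable (by norm_num)) x
  have hB : ContDiff ℝ 2 (fderiv ℝ A) := hA.fderiv_right (by norm_num)
  have hBx : HasFDerivAt (fderiv ℝ A) (fderiv ℝ (fderiv ℝ A) x) x :=
    ((hB.differentiable (by norm_num)) x).hasFDerivAt
  have hAx : HasFDerivAt A (fderiv ℝ A x) x := hAd.hasFDerivAt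
  have hb : ∀ a b : E, HasFDerivAt (fun y => fderiv ℝ A y a b)
      (((fderiv ℝ (fderiv ℝ A) x).flip a).flip b) x := by
    intro a b
    have h1 : HasFDerivAt (fun y => fderiv ℝ A y a)
        ((fderiv ℝ (fderiv ℝ A) x).flip a) x := by
      have := hBx.clm_apply (hasFDerivAt_const a x)
      simpa using this
    have := h1.clm_apply (hasFDerivAt_const b x)
    simpa using this
  have ha : ∀ a : E, HasFDerivAt (fun y => A y a) ((fderiv ℝ A x).flip a) x := by
    intro a
    have := hAx.clm_apply (hasFDerivAt_const a x)
    simpa using this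
  have h : HasFDerivAt (fun y => (fderiv ℝ A y v) w - (fderiv ℝ A y w) v + (A y v) * (A y w) - (A y w) * (A y v))
      ((((fderiv ℝ (fderiv ℝ A) x).flip v).flip w
        - ((fderiv ℝ (fderiv ℝ A) x).flip w).flip v)
        + (A x v • ((fderiv ℝ A x).flip w) + ((fderiv ℝ A x).flip v).smulRight (A x w))
        - (A x w • ((fderiv ℝ A x).flip v) + ((fderiv ℝ A x).flip w).smulRight (A x v))) x := by
    exact (((hb v w).sub (hb w v)).add ((ha v).mul' (ha w))).sub ((ha w).mul' (ha v))
  rw [h.fderiv]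
  simp [smul_eq_mul, mul_comm]
  abel

lemma curv_fderiv (A : E → (E →L[ℝ] Matrix (Fin n) (Fin n) ℂ)) (hA : ContDiff ℝ 3 A)
    (x v w u : E) :
    fderiv ℝ (fun y => curv A y v w) x u =
      fderiv ℝ (fderiv ℝ A) x u v w - fderiv ℝ (fderiv ℝ A) x u w v
      + ((fderiv ℝ A x u v) * A x w + A x v * (fderiv ℝ A x u w))
      - ((fderiv ℝ A x u w) * A x v + A x w * (fderiv ℝ A x u v)) := by
  exact curv_fderiv_gen A hA x v w u

/-- Bianchi identity: the covariant exterior derivative of the curvature vanishes, where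
`[X, Y] = X * Y - Y * X` is written out explicitly. -/
theorem bianchi_identity
    (hn : 0 < n)
    (A : E → (E →L[ℝ] Matrix (Fin n) (Fin n) ℂ)) (hA : ContDiff ℝ 3 A) :
    ∀ x v₁ v₂ v₃ : E,
      (fderiv ℝ (fun y => curv A y v₂ v₃) x) v₁
        - (fderiv ℝ (fun y => curv A y v₁ v₃) x) v₂
        + (fderiv ℝ (fun y => curv A y v₁ v₂) x) v₃
        + (A x v₁ * curv A x v₂ v₃ - curv A x v₂ v₃ * A x v₁)
        - (A x v₂ * curv A x v₁ v₃ - curv A x v₁ v₃ * A x v₂)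
        + (A x v₃ * curv A x v₁ v₂ - curv A x v₁ v₂ * A x v₃) = 0 := by
  intro x v₁ v₂ v₃
  have hsymm : ∀ a b : E, fderiv ℝ (fderiv ℝ A) x a b = fderiv ℝ (fderiv ℝ A) x b a :=
    hA.contDiffAt.isSymmSndFDerivAt (by norm_num)
  rw [curv_fderiv A hA, curv_fderiv A hA, curv_fderiv A hA,
    hsymm v₂ v₁, hsymm v₃ v₁, hsymm v₃ v₂]
  simp only [curv]
  noncomm_ring
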